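/- Exact Kullback–Leibler divergence of the uniform restriction to a weighted-ℓ1 ball of functions. Fix I ⊆ {1,…,p}, an integer 1 ≤ M ≤ n, and γ ∈ (0, 1/n]. For f = Σ_{j=1}^M β_j φ_j ∈ F_M(C+1), set ‖f‖_M = Σ_{j=1}^M j|β_j|. Let f*_{I,M} ∈ F_M(C) and let ρ²_{I,M,γ} be the probability measure with density with respect to ν_M proportional to the indicator 1[‖f − f*_{I,M}‖_M ≤ γ]. Then K(ρ²_{I,M,γ}, ν_M) = M · log( (C+1)/γ ). -/

import Mathlib

open MeasureTheory Finset Set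

/-- The coefficient set `B_M(Λ) = {β ∈ ℝ^M : ∑_{j=1}^M j |β_j| ≤ Λ, β_M ≠ 0}`
(indices `j : Fin M` carry weight `j + 1`). -/
def BMset (M : ℕ) (Λ : ℝ) : Set (Fin M → ℝ) :=
  {β | (∑ j : Fin M, ((j.1 : ℝ) + 1) * |β j| ≤ Λ) ∧
    ∀ h : 0 < M, β ⟨M - 1, Nat.sub_lt h Nat.one_pos⟩ ≠ 0}

/-- The map `Φ_M : β ↦ ∑_{j=1}^M β_j φ_j`. -/
def PhiM (φ : ℕ → ℝ → ℝ) (M : ℕ) (β : Fin M → ℝ) : ℝ → ℝ :=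
  fun t => ∑ j : Fin M, β j * φ (j.1 + 1) t

/-- The prior component `ν_M`: image under `Φ_M` of the uniform (normalized Lebesgue)
probability measure on `B_M(C+1)`. -/
noncomputable def nuM (φ : ℕ → ℝ → ℝ) (M : ℕ) (C : ℝ) : Measure (ℝ → ℝ) :=
  Measure.map (PhiM φ M)
    ((volume (BMset M (C + 1)))⁻¹ • volume.restrict (BMset M (C + 1)))

/-- The Kullback–Leibler divergence, as an extended real: `∫ log (dm/dμ) dm` if `m ≪ μ`
(with value `+∞` if the integral diverges), and `+∞` otherwise. -/
noncomputable def klDivE {E : Type*} [MeasurableSpace E] (m μ : Measure E) : EReal :=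
  open Classical in
  if m ≪ μ ∧ Integrable (llr m μ) m then ((∫ x, llr m μ x ∂m : ℝ) : EReal) else ⊤

/-!
The triangle inequality puts the coefficient ball `s = {β | ‖β - β*‖_M ≤ γ}` inside
`{β | ‖β‖_M ≤ C + 1}`, which differs from `B_M(C+1)` only by the null hyperplane `β_M = 0`;
since Lebesgue measure scales like `r ^ M` on weighted `ℓ¹` balls, the prior gives `s` mass
`m = (γ / (C + 1)) ^ M`. The normalized restriction of a finite measure to a set of mass `m` has
log-likelihood ratio `-log m` almost everywhere, hence KL divergence `-log m = M log ((C+1)/γ)`.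

The image `Φ_M '' s` need not be measurable for the product σ-algebra on `ℝ → ℝ`. But an
injective linear map on a finite-dimensional space stays injective after evaluating at finitely
many points, which produces a measurable `S` with `Φ_M ⁻¹' S = s`, and the restrictions of
`ν_M` to `Φ_M '' s` and to `S` agree.
-/

open ProbabilityTheory Function
open scoped ENNReal Pointwise

section MeasureLemmas

variable {α β : Type*} [MeasurableSpace α] [MeasurableSpace β]

theorem MeasureTheory.Measure.restrict_map_image_eq {f : α → β} (hf : Measurable f)
    (μ : Measure α) {s : Set α} {S : Set β} (hS : MeasurableSet S) (hSs : f ⁻¹' S = s) :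
    (μ.map f).restrict (f '' s) = (μ.map f).restrict S := by
  have himage : f '' s ⊆ S := image_subset_iff.2 hSs.ge
  have hpre : f ⁻¹' (f '' s) = s :=
    (preimage_mono himage).trans hSs.le |>.antisymm (subset_preimage_image f s)
  ext t ht
  rw [Measure.restrict_apply ht, Measure.restrict_apply ht]
  refine le_antisymm (measure_mono (inter_subset_inter_right t himage)) ?_
  calc (μ.map f) (t ∩ S) = μ (f ⁻¹' (t ∩ f '' s)) := by
        rw [Measure.map_apply hf (ht.inter hS), preimage_inter, preimage_inter, hpre, hSs]
    _ ≤ (μ.map f) (t ∩ f '' s) := Measure.le_map_apply hf.aemeasurable _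

theorem ProbabilityTheory.cond_map_image_eq {f : α → β} (hf : Measurable f) (μ : Measure α)
    {s : Set α} {S : Set β} (hS : MeasurableSet S) (hSs : f ⁻¹' S = s) :
    (μ.map f)[|f '' s] = (μ.map f)[|S] := by
  have hrestrict := Measure.restrict_map_image_eq hf μ hS hSs
  have hmass : μ.map f (f '' s) = μ.map f S := by
    simpa using congr_arg (fun ν : Measure β ↦ ν univ) hrestrict
  rw [ProbabilityTheory.cond, ProbabilityTheory.cond, hrestrict, hmass]

theorem ProbabilityTheory.cond_eq_withDensity_indicator (ν : Measure α) {S : Set α}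
    (hS : MeasurableSet S) :
    ν[|S] = ν.withDensity (S.indicator fun _ ↦ (ν S)⁻¹) := by
  rw [withDensity_indicator hS, withDensity_const, ProbabilityTheory.cond]

theorem klDivE_cond_self (ν : Measure α) [SigmaFinite ν] {S : Set α} (hS : MeasurableSet S)
    (h0 : ν S ≠ 0) (htop : ν S ≠ ∞) :
    klDivE ν[|S] ν = ((-Real.log (ν S).toReal : ℝ) : EReal) := by
  have := cond_isProbabilityMeasure_of_finite h0 htop
  have hac : ν[|S] ≪ ν := cond_absolutelyContinuous
  have hrn : ∀ᵐ x ∂ν[|S], ν[|S].rnDeriv ν x = S.indicator (fun _ ↦ (ν S)⁻¹) x := by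
    refine hac.ae_le ?_
    rw [cond_eq_withDensity_indicator ν hS]
    exact Measure.rnDeriv_withDensity ν (measurable_const.indicator hS)
  have hllr : llr ν[|S] ν =ᵐ[ν[|S]] fun _ ↦ -Real.log (ν S).toReal := by
    filter_upwards [hrn, ae_cond_mem hS] with x hx hxS
    rw [llr, hx, indicator_of_mem hxS, ENNReal.toReal_inv, Real.log_inv]
  rw [klDivE, if_pos ⟨hac, (integrable_const _).congr hllr.symm⟩, integral_congr_ae hllr,
    integral_const, probReal_univ, one_smul]

end MeasureLemmas

theorem LinearMap.exists_finset_injective_restrict {K V X : Type*} [Field K] [AddCommGroup V]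
    [Module K V] [FiniteDimensional K V] (Φ : V →ₗ[K] X → K) (hΦ : Injective Φ) :
    ∃ T : Finset X, Injective fun v (t : T) ↦ Φ v t := by
  classical
  -- a minimal kernel among finite restrictions lies in the kernel of every further evaluation
  let restrictTo (T : Finset X) : V →ₗ[K] T → K := (LinearMap.funLeft K K Subtype.val).comp Φ
  obtain ⟨_, ⟨T, rfl⟩, hmin⟩ := IsArtinian.set_has_minimal
    (Set.range fun T ↦ LinearMap.ker (restrictTo T)) ⟨_, ∅, rfl⟩
  refine ⟨T, (injective_iff_map_eq_zero (restrictTo T)).2 fun v hv ↦ hΦ ?_⟩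
  rw [map_zero]
  ext x
  have hle : LinearMap.ker (restrictTo (insert x T)) ≤ LinearMap.ker (restrictTo T) :=
    fun w hw ↦ funext fun t ↦ congr_fun hw ⟨t, Finset.mem_insert_of_mem t.2⟩
  have heq := (hle.lt_or_eq).resolve_left (hmin _ ⟨_, rfl⟩)
  have hv' : v ∈ LinearMap.ker (restrictTo (insert x T)) := heq ▸ hv
  exact congr_fun hv' ⟨x, Finset.mem_insert_self x T⟩

theorem LinearMap.exists_measurableSet_preimage_eq {V X : Type*} [NormedAddCommGroup V]
    [NormedSpace ℝ V] [FiniteDimensional ℝ V] (Φ : V →ₗ[ℝ] X → ℝ) (hΦ : Injective Φ)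
    {s : Set V} (hs : IsCompact s) : ∃ S : Set (X → ℝ), MeasurableSet S ∧ Φ ⁻¹' S = s := by
  obtain ⟨T, hT⟩ := Φ.exists_finset_injective_restrict hΦ
  let L : V →ₗ[ℝ] T → ℝ := (LinearMap.funLeft ℝ ℝ Subtype.val).comp Φ
  have hLs : MeasurableSet (L '' s) :=
    (hs.image L.continuous_of_finiteDimensional).isClosed.measurableSet
  refine ⟨(fun f (t : T) ↦ f t) ⁻¹' (L '' s), ?_, hT.preimage_image s⟩
  exact (measurable_pi_lambda _ fun t ↦ measurable_pi_apply _) hLs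

theorem MeasureTheory.Measure.addHaar_sublevel_sub_eq {E : Type*} [NormedAddCommGroup E]
    [NormedSpace ℝ E] [MeasurableSpace E] [BorelSpace E] [FiniteDimensional ℝ E] (μ : Measure E)
    [μ.IsAddHaarMeasure] {N : E → ℝ} (hN : ∀ (t : ℝ) x, N (t • x) = |t| * N x) (c : E)
    {r : ℝ} (hr : 0 < r) :
    μ {x | N (x - c) ≤ r} = ENNReal.ofReal (r ^ Module.finrank ℝ E) * μ {x | N x ≤ 1} := by
  have hset : {x | N (x - c) ≤ r} = (· + -c) ⁻¹' (r • {x | N x ≤ 1}) := by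
    ext x
    rw [Set.mem_preimage, mem_smul_set_iff_inv_smul_mem₀ hr.ne', Set.mem_ofPred_eq,
      Set.mem_ofPred_eq, hN, abs_inv, abs_of_pos hr, inv_mul_le_iff₀ hr, mul_one, ← sub_eq_add_neg]
  rw [hset, measure_preimage_add_right, Measure.addHaar_smul, abs_of_pos (pow_pos hr _)]

def weightedL1 {M : ℕ} (β : Fin M → ℝ) : ℝ := ∑ j : Fin M, ((j.1 : ℝ) + 1) * |β j|

section WeightedL1

variable {M : ℕ}

theorem weightedL1_nonneg (β : Fin M → ℝ) : 0 ≤ weightedL1 β :=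
  Finset.sum_nonneg fun _ _ ↦ by positivity

theorem weightedL1_smul (t : ℝ) (β : Fin M → ℝ) : weightedL1 (t • β) = |t| * weightedL1 β := by
  simp only [weightedL1, Pi.smul_apply, smul_eq_mul, abs_mul, Finset.mul_sum]
  exact Finset.sum_congr rfl fun j _ ↦ by ring

theorem weightedL1_add_le (β β' : Fin M → ℝ) :
    weightedL1 (β + β') ≤ weightedL1 β + weightedL1 β' := by
  rw [weightedL1, weightedL1, weightedL1, ← Finset.sum_add_distrib]
  gcongr with j
  rw [← mul_add]
  gcongr
  exact abs_add_le _ _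

theorem abs_le_weightedL1 (β : Fin M → ℝ) (j : Fin M) : |β j| ≤ weightedL1 β :=
  calc |β j| ≤ ((j.1 : ℝ) + 1) * |β j| := le_mul_of_one_le_left (abs_nonneg _) (by simp)
    _ ≤ weightedL1 β :=
      Finset.single_le_sum (f := fun k : Fin M ↦ ((k.1 : ℝ) + 1) * |β k|)
        (fun _ _ ↦ by positivity) (Finset.mem_univ j)

theorem continuous_weightedL1 : Continuous (weightedL1 : (Fin M → ℝ) → ℝ) :=
  continuous_finsetSum _ fun j _ ↦ continuous_const.mul (continuous_apply j).abs

theorem isCompact_weightedL1_sub_le (c : Fin M → ℝ) (r : ℝ) :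
    IsCompact {β | weightedL1 (β - c) ≤ r} := by
  refine Metric.isCompact_of_isClosed_isBounded
    (isClosed_le (continuous_weightedL1.comp (continuous_id.sub continuous_const))
      continuous_const) ((Metric.isBounded_closedBall (x := c) (r := r)).subset fun β hβ ↦ ?_)
  have hr : 0 ≤ r := (weightedL1_nonneg _).trans hβ
  rw [mem_closedBall_iff_norm, pi_norm_le_iff_of_nonneg hr]
  exact fun j ↦ (Real.norm_eq_abs _).trans_le ((abs_le_weightedL1 _ j).trans hβ)

end WeightedL1

section Volume

variable {M : ℕ}

theorem volume_weightedL1_le_one_pos : 0 < volume {β : Fin M → ℝ | weightedL1 β ≤ 1} := by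
  have hopen : IsOpen {β : Fin M → ℝ | weightedL1 β < 1} :=
    isOpen_lt continuous_weightedL1 continuous_const
  refine (hopen.measure_pos volume ⟨0, ?_⟩).trans_le
    (measure_mono (ofPred_subset_ofPred.2 fun _ ↦ le_of_lt))
  simp [weightedL1]

theorem volume_weightedL1_le_one_lt_top : volume {β : Fin M → ℝ | weightedL1 β ≤ 1} < ∞ := by
  simpa using (isCompact_weightedL1_sub_le (0 : Fin M → ℝ) 1).measure_lt_top (μ := volume)

theorem volume_weightedL1_sub_le (c : Fin M → ℝ) {r : ℝ} (hr : 0 < r) :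
    volume {β | weightedL1 (β - c) ≤ r} =
      ENNReal.ofReal (r ^ M) * volume {β : Fin M → ℝ | weightedL1 β ≤ 1} := by
  rw [Measure.addHaar_sublevel_sub_eq volume weightedL1_smul c hr, Module.finrank_fin_fun]

theorem BMset_ae_eq (Λ : ℝ) : BMset M Λ =ᵐ[volume] {β | weightedL1 β ≤ Λ} := by
  have hlast : ∀ᵐ β : Fin M → ℝ, ∀ h : 0 < M, β ⟨M - 1, Nat.sub_lt h Nat.one_pos⟩ ≠ 0 := by
    by_cases hM : 0 < M
    · filter_upwards [Measure.ae_eval_ne (fun _ ↦ volume) ⟨M - 1, Nat.sub_lt hM Nat.one_pos⟩ 0]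
        with β hβ using fun _ ↦ hβ
    · exact Filter.Eventually.of_forall fun _ h ↦ absurd h hM
  filter_upwards [hlast] with β hβ
  exact propext ⟨fun h ↦ h.1, fun h ↦ ⟨h, hβ⟩⟩

theorem volume_cond_BMset_weightedL1_sub_le {Λ r : ℝ} (hr : 0 < r) (c : Fin M → ℝ)
    (hc : weightedL1 c + r ≤ Λ) :
    volume[|BMset M Λ] {β | weightedL1 (β - c) ≤ r} = ENNReal.ofReal ((r / Λ) ^ M) := by
  have hΛ : 0 < Λ := by linarith [weightedL1_nonneg c]
  have hball : {β | weightedL1 (β - c) ≤ r} ⊆ {β | weightedL1 β ≤ Λ} := fun β hβ ↦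
    calc weightedL1 β = weightedL1 (β - c + c) := by rw [sub_add_cancel]
      _ ≤ weightedL1 (β - c) + weightedL1 c := weightedL1_add_le _ _
      _ ≤ Λ := by linarith [show weightedL1 (β - c) ≤ r from hβ]
  have hBball : volume (BMset M Λ ∩ {β | weightedL1 (β - c) ≤ r}) =
      volume {β | weightedL1 (β - c) ≤ r} := by
    have := measure_congr ((BMset_ae_eq (M := M) Λ).inter
      (Filter.EventuallyEq.refl (ae volume) {β | weightedL1 (β - c) ≤ r}))
    rw [this, inter_eq_right.2 hball]
  have hB : volume (BMset M Λ) = volume {β : Fin M → ℝ | weightedL1 (β - 0) ≤ Λ} := by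
    simpa using measure_congr (BMset_ae_eq (M := M) Λ)
  have hv0 := volume_weightedL1_le_one_pos (M := M)
  have hvtop := volume_weightedL1_le_one_lt_top (M := M)
  rw [cond_apply' (isCompact_weightedL1_sub_le c r).measurableSet, hBball, hB,
    volume_weightedL1_sub_le _ hr, volume_weightedL1_sub_le _ hΛ, ← ENNReal.div_eq_inv_mul,
    ENNReal.mul_div_mul_right _ _ hv0.ne' hvtop.ne,
    ← ENNReal.ofReal_div_of_pos (pow_pos hΛ M), div_pow]

end Volume

theorem PhiM_eq_linearCombination (φ : ℕ → ℝ → ℝ) (M : ℕ) :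
    PhiM φ M = Fintype.linearCombination ℝ fun j : Fin M ↦ φ (j.1 + 1) := by
  ext β t
  simp [PhiM, Fintype.linearCombination_apply, Finset.sum_apply]

theorem measurable_PhiM (φ : ℕ → ℝ → ℝ) (M : ℕ) : Measurable (PhiM φ M) :=
  measurable_pi_lambda _ fun _ ↦ Finset.measurable_sum _ fun j _ ↦
    (measurable_pi_apply j).mul_const _

instance isFiniteMeasure_nuM (φ : ℕ → ℝ → ℝ) (M : ℕ) (C : ℝ) : IsFiniteMeasure (nuM φ M C) :=
  inferInstanceAs (IsFiniteMeasure ((volume[|BMset M (C + 1)]).map (PhiM φ M)))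

theorem kl_uniform_restriction_function_ball_general
    (n : ℕ)
    (M : ℕ)
    (C : ℝ) (γ : ℝ) (hγ : 0 < γ) (hγ' : γ ≤ 1 / n)
    (φ : ℕ → ℝ → ℝ)
    (hΦinj : Function.Injective (PhiM φ M))
    (βstar : Fin M → ℝ)
    (hβstarC : ∑ j : Fin M, ((j.1 : ℝ) + 1) * |βstar j| ≤ C) :
    klDivE
        (((nuM φ M C)
            (PhiM φ M ''
              {β : Fin M → ℝ | ∑ j : Fin M, ((j.1 : ℝ) + 1) * |β j - βstar j| ≤ γ}))⁻¹ •
          (nuM φ M C).restrict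
            (PhiM φ M ''
              {β : Fin M → ℝ | ∑ j : Fin M, ((j.1 : ℝ) + 1) * |β j - βstar j| ≤ γ}))
        (nuM φ M C) =
      (((M : ℝ) * Real.log ((C + 1) / γ) : ℝ) : EReal) := by
  have hβstar : weightedL1 βstar ≤ C := hβstarC
  have hC0 : 0 ≤ C := (weightedL1_nonneg βstar).trans hβstar
  have hγ1 : γ ≤ 1 := hγ'.trans (by simpa using Nat.cast_inv_le_one (α := ℝ) n)
  obtain ⟨S, hS, hΦS⟩ := LinearMap.exists_measurableSet_preimage_eq _
    (PhiM_eq_linearCombination φ M ▸ hΦinj) (isCompact_weightedL1_sub_le βstar γ)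
  rw [← PhiM_eq_linearCombination] at hΦS
  have hνS : nuM φ M C S = ENNReal.ofReal ((γ / (C + 1)) ^ M) := by
    rw [nuM, Measure.map_apply (measurable_PhiM φ M) hS, hΦS]
    exact volume_cond_BMset_weightedL1_sub_le hγ βstar (by linarith)
  change klDivE (nuM φ M C)[|PhiM φ M '' {β | weightedL1 (β - βstar) ≤ γ}] (nuM φ M C) = _
  rw [nuM, cond_map_image_eq (measurable_PhiM φ M) _ hS hΦS, ← nuM,
    klDivE_cond_self _ hS (hνS ▸ (ENNReal.ofReal_pos.2 (by positivity)).ne')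
      (hνS ▸ ENNReal.ofReal_ne_top), hνS,
    ENNReal.toReal_ofReal (by positivity), Real.log_pow, Real.log_div hγ.ne' (by positivity),
    Real.log_div (by positivity) hγ.ne']
  congr 1
  ring

/-- **Exact Kullback–Leibler divergence of the uniform restriction to a weighted-ℓ1 ball of
functions.** For `γ ∈ (0, 1/n]` and `f*_{I,M} = Φ_M β* ∈ F_M(C)`, the normalized
restriction `ρ²_{I,M,γ}` of `ν_M` to `{f : ‖f − f*_{I,M}‖_M ≤ γ}` (the image under the
injective map `Φ_M` of the weighted-ℓ1 ball of radius `γ` around `β*`) satisfies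
`K(ρ²_{I,M,γ}, ν_M) = M log ((C+1)/γ)`. -/
theorem kl_uniform_restriction_function_ball
    (p n : ℕ) (hn : 1 ≤ n) (I : Finset (Fin p))
    (M : ℕ) (hM1 : 1 ≤ M) (hMn : M ≤ n)
    (C : ℝ) (hC : 1 ≤ C) (γ : ℝ) (hγ : 0 < γ) (hγ' : γ ≤ 1 / n)
    (φ : ℕ → ℝ → ℝ) (hφmeas : ∀ j, Measurable (φ j))
    (hΦinj : Function.Injective (PhiM φ M))
    (βstar : Fin M → ℝ)
    (hβstarC : ∑ j : Fin M, ((j.1 : ℝ) + 1) * |βstar j| ≤ C)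
    (hβstarM : ∀ h : 0 < M, βstar ⟨M - 1, Nat.sub_lt h Nat.one_pos⟩ ≠ 0) :
    klDivE
        (((nuM φ M C)
            (PhiM φ M ''
              {β : Fin M → ℝ | ∑ j : Fin M, ((j.1 : ℝ) + 1) * |β j - βstar j| ≤ γ}))⁻¹ •
          (nuM φ M C).restrict
            (PhiM φ M ''
              {β : Fin M → ℝ | ∑ j : Fin M, ((j.1 : ℝ) + 1) * |β j - βstar j| ≤ γ}))
        (nuM φ M C) =
      (((M : ℝ) * Real.log ((C + 1) / γ) : ℝ) : EReal) :=
  kl_uniform_restriction_function_ball_general n M C γ hγ hγ' φ hΦinj βstar hβstarC
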